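/- arXiv:1402.3642 — 8 statements merged into one kernel-verified Lean document; each statement's English description precedes it below -/
import Mathlib

section
/- Let V be a real normed vector space and Ω ⊆ V an open convex subset with Ω ≠ V. Then the function x ↦ dist(x, V \ Ω) is concave on Ω; that is, for all x₁, x₂ ∈ Ω and a₁, a₂ > 0 with a₁ + a₂ = 1, one has dist(a₁x₁ + a₂x₂, V \ Ω) ≥ a₁·dist(x₁, V \ Ω) + a₂·dist(x₂, V \ Ω). -/
/-! Write `dᵢ = infDist xᵢ Ωᶜ` and `D = a₁ d₁ + a₂ d₂`, so that `ball xᵢ dᵢ ⊆ Ω`. A point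
`a₁ x₁ + a₂ x₂ + v` with `‖v‖ < D` is the convex combination, with weights `a₁, a₂`, of the points
`xᵢ + (dᵢ / D) v ∈ ball xᵢ dᵢ ∪ {xᵢ}`, hence lies in `Ω` by convexity. So the ball of radius `D`
about `a₁ x₁ + a₂ x₂` misses `Ωᶜ`. -/

open Metric Set

section

variable {E : Type*} [NormedAddCommGroup E] [NormedSpace ℝ E] {s : Set E}

theorem Metric.le_infDist_compl_of_ball_subset {α : Type*} [PseudoMetricSpace α] {s : Set α}
    {x : α} {r : ℝ} (hs : sᶜ.Nonempty) (h : ball x r ⊆ s) : r ≤ infDist x sᶜ :=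
  (le_infDist hs).2 fun _ hy => not_lt.1 fun hlt => hy (h (mem_ball'.2 hlt))

theorem add_infDist_div_smul_mem {x v : E} {r : ℝ} (hx : x ∈ s) (hv : ‖v‖ < r) :
    x + (infDist x sᶜ / r) • v ∈ s := by
  rcases (infDist_nonneg (x := x) (s := sᶜ)).eq_or_lt with h | h
  · simpa [← h] using hx
  refine ball_infDist_compl_subset (x := x) (mem_ball'.2 ?_)
  have hr : 0 < r := (norm_nonneg v).trans_lt hv
  calc dist x (x + (infDist x sᶜ / r) • v) = infDist x sᶜ / r * ‖v‖ := by
        rw [dist_self_add_right, norm_smul, Real.norm_of_nonneg (div_pos h hr).le]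
    _ < infDist x sᶜ / r * r := by gcongr
    _ = infDist x sᶜ := div_mul_cancel₀ _ hr.ne'

theorem Convex.ball_combo_infDist_compl_subset (hs : Convex ℝ s) {x₁ x₂ : E} (hx₁ : x₁ ∈ s)
    (hx₂ : x₂ ∈ s) {a₁ a₂ : ℝ} (ha₁ : 0 ≤ a₁) (ha₂ : 0 ≤ a₂) (hsum : a₁ + a₂ = 1) :
    ball (a₁ • x₁ + a₂ • x₂) (a₁ * infDist x₁ sᶜ + a₂ * infDist x₂ sᶜ) ⊆ s := by
  intro y hy
  set D := a₁ * infDist x₁ sᶜ + a₂ * infDist x₂ sᶜ with hD_def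
  obtain ⟨v, hv, rfl⟩ : ∃ v, ‖v‖ < D ∧ y = a₁ • x₁ + a₂ • x₂ + v :=
    ⟨y - (a₁ • x₁ + a₂ • x₂), mem_ball_iff_norm.1 hy, by abel⟩
  have hD : 0 < D := (norm_nonneg v).trans_lt hv
  have hy : a₁ • x₁ + a₂ • x₂ + v =
      a₁ • (x₁ + (infDist x₁ sᶜ / D) • v) + a₂ • (x₂ + (infDist x₂ sᶜ / D) • v) := by
    match_scalars
    · ring
    · ring
    · field_simp
      exact hD_def
  rw [hy]
  exact hs (add_infDist_div_smul_mem hx₁ hv) (add_infDist_div_smul_mem hx₂ hv) ha₁ ha₂ hsum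

theorem Convex.concaveOn_infDist_compl (hs : Convex ℝ s) :
    ConcaveOn ℝ s fun x => infDist x sᶜ := by
  refine ⟨hs, fun x₁ hx₁ x₂ hx₂ a₁ a₂ ha₁ ha₂ hsum => ?_⟩
  rcases sᶜ.eq_empty_or_nonempty with hempty | hne
  · simp [hempty]
  exact le_infDist_compl_of_ball_subset hne
    (hs.ball_combo_infDist_compl_subset hx₁ hx₂ ha₁ ha₂ hsum)

end

theorem dist_to_compl_concave_general
    {V : Type*} [NormedAddCommGroup V] [NormedSpace ℝ V]
    (Ω : Set V) (hconv : Convex ℝ Ω)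
    (x₁ x₂ : V) (hx₁ : x₁ ∈ Ω) (hx₂ : x₂ ∈ Ω)
    (a₁ a₂ : ℝ) (ha₁ : 0 < a₁) (ha₂ : 0 < a₂) (hsum : a₁ + a₂ = 1) :
    a₁ * Metric.infDist x₁ Ωᶜ + a₂ * Metric.infDist x₂ Ωᶜ ≤
      Metric.infDist (a₁ • x₁ + a₂ • x₂) Ωᶜ :=
  hconv.concaveOn_infDist_compl.2 hx₁ hx₂ ha₁.le ha₂.le hsum

/-- concavity of the distance to the complement of a proper open
convex subset of a real normed vector space. -/
theorem dist_to_compl_concave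
    {V : Type*} [NormedAddCommGroup V] [NormedSpace ℝ V]
    (Ω : Set V) (hopen : IsOpen Ω) (hconv : Convex ℝ Ω) (hproper : Ω ≠ Set.univ)
    (x₁ x₂ : V) (hx₁ : x₁ ∈ Ω) (hx₂ : x₂ ∈ Ω)
    (a₁ a₂ : ℝ) (ha₁ : 0 < a₁) (ha₂ : 0 < a₂) (hsum : a₁ + a₂ = 1) :
    a₁ * Metric.infDist x₁ Ωᶜ + a₂ * Metric.infDist x₂ Ωᶜ ≤
      Metric.infDist (a₁ • x₁ + a₂ • x₂) Ωᶜ :=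
  dist_to_compl_concave_general Ω hconv x₁ x₂ hx₁ hx₂ a₁ a₂ ha₁ ha₂ hsum
end

section
/- Let φ : ℝ_{>0} → ℝ be a strictly decreasing convex function and let Ω be a proper open convex subset of a real normed vector space V. Then the function x ↦ φ(dist(x, V \ Ω)) is convex on Ω. -/
open Metric Set

lemma ball_combo_subset
    {V : Type*} [NormedAddCommGroup V] [NormedSpace ℝ V]
    {Ω : Set V} (hconv : Convex ℝ Ω) {x y : V} {rx ry : ℝ}
    (hrx : 0 < rx) (hry : 0 < ry)
    (hbx : ball x rx ⊆ Ω) (hby : ball y ry ⊆ Ω)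
    {a b : ℝ} (ha : 0 < a) (hb : 0 < b) (hab : a + b = 1) :
    ball (a • x + b • y) (a * rx + b * ry) ⊆ Ω := by
  intro w hw
  have hRpos : 0 < a * rx + b * ry := by positivity
  rw [mem_ball, dist_eq_norm] at hw
  set v := w - (a • x + b • y) with hv
  have hx' : x + (rx / (a * rx + b * ry)) • v ∈ Ω := by
    apply hbx
    rw [mem_ball, dist_eq_norm, add_sub_cancel_left, norm_smul, Real.norm_eq_abs,
      abs_of_pos (div_pos hrx hRpos)]
    calc rx / (a * rx + b * ry) * ‖v‖ < rx / (a * rx + b * ry) * (a * rx + b * ry) :=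
          mul_lt_mul_of_pos_left hw (div_pos hrx hRpos)
      _ = rx := div_mul_cancel₀ _ hRpos.ne'
  have hy' : y + (ry / (a * rx + b * ry)) • v ∈ Ω := by
    apply hby
    rw [mem_ball, dist_eq_norm, add_sub_cancel_left, norm_smul, Real.norm_eq_abs,
      abs_of_pos (div_pos hry hRpos)]
    calc ry / (a * rx + b * ry) * ‖v‖ < ry / (a * rx + b * ry) * (a * rx + b * ry) :=
          mul_lt_mul_of_pos_left hw (div_pos hry hRpos)
      _ = ry := div_mul_cancel₀ _ hRpos.ne'
  have hcomb : a • (x + (rx / (a * rx + b * ry)) • v)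
      + b • (y + (ry / (a * rx + b * ry)) • v) = w := by
    have h1 : a * (rx / (a * rx + b * ry)) + b * (ry / (a * rx + b * ry)) = 1 := by
      field_simp
    have h2 : a • ((rx / (a * rx + b * ry)) • v) + b • ((ry / (a * rx + b * ry)) • v) = v := by
      rw [smul_smul, smul_smul, ← add_smul, h1, one_smul]
    calc a • (x + (rx / (a * rx + b * ry)) • v) + b • (y + (ry / (a * rx + b * ry)) • v)
        = (a • x + b • y) + (a • ((rx / (a * rx + b * ry)) • v)
            + b • ((ry / (a * rx + b * ry)) • v)) := by module
      _ = (a • x + b • y) + v := by rw [h2]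
      _ = w := by rw [hv]; abel
  rw [← hcomb]
  exact hconv hx' hy' ha.le hb.le hab

lemma concaveOn_infDist_compl
    {V : Type*} [NormedAddCommGroup V] [NormedSpace ℝ V]
    (Ω : Set V) (hopen : IsOpen Ω) (hconv : Convex ℝ Ω) (hproper : Ω ≠ Set.univ) :
    ConcaveOn ℝ Ω (fun x => Metric.infDist x Ωᶜ) := by
  have hne : Ωᶜ.Nonempty := by
    rw [Set.nonempty_compl]; exact hproper
  refine ⟨hconv, ?_⟩
  intro x hx y hy a b ha hb hab
  have hrxpos : 0 < infDist x Ωᶜ := by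
    rw [← hopen.isClosed_compl.notMem_iff_infDist_pos hne]
    simpa using hx
  have hrypos : 0 < infDist y Ωᶜ := by
    rw [← hopen.isClosed_compl.notMem_iff_infDist_pos hne]
    simpa using hy
  rcases eq_or_lt_of_le ha with ha0 | hapos
  · have hb1 : b = 1 := by linarith
    simp [← ha0, hb1]
  rcases eq_or_lt_of_le hb with hb0 | hbpos
  · have ha1 : a = 1 := by linarith
    simp [← hb0, ha1]
  have hball : ball (a • x + b • y) (a * infDist x Ωᶜ + b * infDist y Ωᶜ) ⊆ Ω :=
    ball_combo_subset hconv hrxpos hrypos ball_infDist_compl_subset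
      ball_infDist_compl_subset hapos hbpos hab
  simp only [smul_eq_mul]
  by_contra h
  push_neg at h
  obtain ⟨w, hwc, hwlt⟩ := (infDist_lt_iff hne).mp h
  exact hwc (hball (by rwa [mem_ball']))

/-- if `φ` is a strictly decreasing convex function on `ℝ_{>0}`
and `Ω` is a proper open convex subset of a real normed vector space, then
`x ↦ φ (dist (x, V \ Ω))` is convex on `Ω`. -/
theorem convexOn_comp_dist_to_compl
    {V : Type*} [NormedAddCommGroup V] [NormedSpace ℝ V]
    (φ : ℝ → ℝ) (hφconv : ConvexOn ℝ (Set.Ioi (0 : ℝ)) φ)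
    (hφanti : StrictAntiOn φ (Set.Ioi (0 : ℝ)))
    (Ω : Set V) (hopen : IsOpen Ω) (hconv : Convex ℝ Ω) (hproper : Ω ≠ Set.univ) :
    ConvexOn ℝ Ω (fun x => φ (Metric.infDist x Ωᶜ)) := by
  have hne : Ωᶜ.Nonempty := by rw [Set.nonempty_compl]; exact hproper
  have hf : ConcaveOn ℝ Ω (fun x => Metric.infDist x Ωᶜ) :=
    concaveOn_infDist_compl Ω hopen hconv hproper
  have hpos : ∀ x ∈ Ω, 0 < Metric.infDist x Ωᶜ := by
    intro x hx
    rw [← hopen.isClosed_compl.notMem_iff_infDist_pos hne]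
    simpa using hx
  refine ⟨hconv, ?_⟩
  intro x hx y hy a b ha hb hab
  have hrxpos : 0 < infDist x Ωᶜ := hpos x hx
  have hrypos : 0 < infDist y Ωᶜ := hpos y hy
  have hcomb : a • infDist x Ωᶜ + b • infDist y Ωᶜ ≤ infDist (a • x + b • y) Ωᶜ :=
    hf.2 hx hy ha hb hab
  have hcombpos : 0 < a • infDist x Ωᶜ + b • infDist y Ωᶜ := by
    simp only [smul_eq_mul]
    rcases lt_or_ge 0 a with h1 | h1
    · have h2 : 0 ≤ b * infDist y Ωᶜ := mul_nonneg hb hrypos.le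
      nlinarith
    · have ha0 : a = 0 := le_antisymm h1 ha
      have hb1 : b = 1 := by linarith
      rw [ha0, hb1]; simpa using hrypos
  have h1 : φ (infDist (a • x + b • y) Ωᶜ) ≤ φ (a • infDist x Ωᶜ + b • infDist y Ωᶜ) := by
    rcases eq_or_lt_of_le hcomb with h | h
    · rw [h]
    · exact (hφanti hcombpos (hcombpos.trans_le hcomb) h).le
  calc φ (infDist (a • x + b • y) Ωᶜ) ≤ φ (a • infDist x Ωᶜ + b • infDist y Ωᶜ) := h1
    _ ≤ a • φ (infDist x Ωᶜ) + b • φ (infDist y Ωᶜ) := hφconv.2 hrxpos hrypos ha hb hab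
end

section
/- Let f : V → ℝ ∪ {+∞} be a closed proper convex function on a finite-dimensional real vector space V. Then f** = f, where f** is the Legendre transform of the Legendre transform f*, computed via the canonical identification V** ≅ V. -/
/-!
Fenchel–Moreau. A bound `legendre f ψ ≤ c` says exactly that the affine function `ψ - c` lies
below `f`, and `f**` is the supremum of these affine minorants, so `f** ≤ f` and it remains to
find, below each point `(x, r)` outside the epigraph, a minorant exceeding `r` at `x`.
Hahn–Banach separates `(x, r)` from the closed convex epigraph by a hyperplane in `V × ℝ`.
A non-vertical hyperplane is the graph of such a minorant. A vertical one, `y ≤ u` on `dom f`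
with `u < y x`, tilts any minorant `ψ - c` (one exists by properness) into `ψ + l • y - (c + l u)`,
which for large `l` is as large as we like at `x`.
-/

open NormedSpace

/-- The epigraph of an `EReal`-valued function. -/
def epigraph {V : Type*} (f : V → EReal) : Set (V × ℝ) :=
  {p | f p.1 ≤ (p.2 : EReal)}

/-- A function `f : V → ℝ ∪ {+∞}` (never `-∞`) is closed proper convex if its
epigraph is closed, convex and nonempty. -/
def ClosedProperConvexOn {V : Type*} [NormedAddCommGroup V] [NormedSpace ℝ V]
    (f : V → EReal) : Prop :=
  (∀ x, f x ≠ ⊥) ∧ IsClosed (epigraph f) ∧ Convex ℝ (epigraph f) ∧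
    (epigraph f).Nonempty

/-- The Legendre (Fenchel) transform `f*(y) = sup_{x ∈ dom f} (⟨x,y⟩ - f x)`. -/
noncomputable def legendre {V : Type*} [NormedAddCommGroup V] [NormedSpace ℝ V]
    (f : V → EReal) (y : StrongDual ℝ V) : EReal :=
  ⨆ x : {x : V // f x ≠ ⊤}, ((y x.1 : EReal) - f x.1)

section
variable {V : Type*} [NormedAddCommGroup V] [NormedSpace ℝ V]

theorem legendre_le_coe_iff (f : V → EReal) (ψ : StrongDual ℝ V) (c : ℝ) :
    legendre f ψ ≤ c ↔ ∀ p ∈ epigraph f, ψ p.1 - p.2 ≤ c := by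
  simp only [legendre, iSup_le_iff, Subtype.forall, Prod.forall, epigraph, Set.mem_ofPred_eq]
  refine forall_congr' fun z => ?_
  induction f z with
  | bot =>
    simp only [ne_eq, bot_ne_top, not_false_eq_true, EReal.coe_sub_bot, top_le_iff,
      EReal.coe_ne_top, bot_le, forall_const, false_iff, not_forall, not_le]
    exact ⟨ψ z - c - 1, by linarith⟩
  | coe a =>
    simp only [ne_eq, EReal.coe_ne_top, not_false_eq_true, forall_const]
    norm_cast
    exact ⟨fun h t hat => by linarith, fun h => h a le_rfl⟩
  | top => simp

theorem legendre_legendre_le (f : V → EReal) (x : V) :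
    legendre (legendre f) (inclusionInDoubleDual ℝ V x) ≤ f x := by
  refine iSup_le fun ψ => ?_
  rcases eq_or_ne (f x) ⊤ with hx | hx
  · simp [hx]
  · have young : (ψ.1 x : EReal) - f x ≤ legendre f ψ.1 :=
      le_iSup (fun z : {z : V // f z ≠ ⊤} => (ψ.1 z.1 : EReal) - f z.1) ⟨x, hx⟩
    exact EReal.sub_le_of_le_add' ((EReal.sub_le_iff_le_add (.inr ψ.2) (.inl hx)).1 young)

theorem coe_sub_le_legendre_legendre {f : V → EReal} {ψ : StrongDual ℝ V} {c : ℝ}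
    (h : legendre f ψ ≤ c) (x : V) :
    ((ψ x - c : ℝ) : EReal) ≤ legendre (legendre f) (inclusionInDoubleDual ℝ V x) :=
  calc ((ψ x - c : ℝ) : EReal) = (ψ x : EReal) - c := EReal.coe_sub _ _
    _ ≤ (ψ x : EReal) - legendre f ψ := EReal.sub_le_sub le_rfl h
    _ ≤ legendre (legendre f) (inclusionInDoubleDual ℝ V x) :=
      le_iSup (fun φ : {φ // legendre f φ ≠ ⊤} => ((inclusionInDoubleDual ℝ V x φ.1 : ℝ) : EReal)
        - legendre f φ.1) ⟨ψ, ne_top_of_le_ne_top (EReal.coe_ne_top c) h⟩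

theorem legendre_add_smul_le {f : V → EReal} {ψ y : StrongDual ℝ V} {c u l : ℝ}
    (hψ : legendre f ψ ≤ c) (hy : ∀ p ∈ epigraph f, y p.1 ≤ u) (hl : 0 ≤ l) :
    legendre f (ψ + l • y) ≤ ((c + l * u : ℝ) : EReal) := by
  rw [legendre_le_coe_iff] at hψ ⊢
  intro p hp
  have := mul_le_mul_of_nonneg_left (hy p hp) hl
  simp only [add_apply, smul_apply, smul_eq_mul]
  linarith [hψ p hp]

theorem legendre_le_of_forall_mem_epigraph {f : V → EReal} {y : StrongDual ℝ V} {s u : ℝ}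
    (hs : s < 0) (hsep : ∀ p ∈ epigraph f, y p.1 + s * p.2 < u) :
    legendre f ((-s)⁻¹ • y) ≤ ((u / -s : ℝ) : EReal) := by
  rw [legendre_le_coe_iff]
  intro p hp
  have hdiv : ((-s)⁻¹ • y) p.1 - p.2 = (y p.1 + s * p.2) / -s := by
    have : s ≠ 0 := hs.ne
    simp only [smul_apply, smul_eq_mul]
    field_simp
    ring
  rw [hdiv]
  exact div_le_div_of_nonneg_right (hsep p hp).le (neg_pos.2 hs).le

theorem exists_separation_of_notMem_epigraph {f : V → EReal} (hcv : Convex ℝ (epigraph f))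
    (hcl : IsClosed (epigraph f)) {x : V} {r : ℝ} (hxr : (x, r) ∉ epigraph f) :
    ∃ (y : StrongDual ℝ V) (s u : ℝ),
      (∀ p ∈ epigraph f, y p.1 + s * p.2 < u) ∧ u < y x + s * r := by
  obtain ⟨φ, u, hsep, hxr⟩ := geometric_hahn_banach_closed_point hcv hcl hxr
  have hφ (z : V) (t : ℝ) : φ (z, t) = φ.comp (.inl ℝ V ℝ) z + φ (0, 1) * t := by
    conv_lhs => rw [show (z, t) = (z, 0) + t • (0, 1) by simp]
    rw [map_add, map_smul, smul_eq_mul, mul_comm]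
    rfl
  exact ⟨φ.comp (.inl ℝ V ℝ), φ (0, 1), u, fun p hp => hφ p.1 p.2 ▸ hsep p hp, hφ x r ▸ hxr⟩

theorem nonpos_of_forall_mem_epigraph {f : V → EReal} (hne : (epigraph f).Nonempty)
    {y : StrongDual ℝ V} {s u : ℝ} (hsep : ∀ p ∈ epigraph f, y p.1 + s * p.2 < u) : s ≤ 0 := by
  obtain ⟨⟨z, t⟩, hzt⟩ := hne
  by_contra! hs
  set t' := max t ((u - y z) / s)
  have hzt' : (z, t') ∈ epigraph f := hzt.trans (EReal.coe_le_coe_iff.2 (le_max_left _ _))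
  have : u - y z ≤ s * t' := (div_le_iff₀' hs).1 (le_max_right _ _)
  linarith [hsep _ hzt']

theorem ClosedProperConvexOn.exists_legendre_le {f : V → EReal} (hf : ClosedProperConvexOn f) :
    ∃ (ψ : StrongDual ℝ V) (c : ℝ), legendre f ψ ≤ c := by
  obtain ⟨hbot, hcl, hcv, ⟨z, t⟩, hzt⟩ := hf
  lift f z to ℝ using ⟨ne_top_of_le_ne_top (EReal.coe_ne_top t) hzt, hbot z⟩ with a ha
  have hz : (z, a) ∈ epigraph f := ha.ge
  have hz' : (z, a - 1) ∉ epigraph f := fun h =>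
    (sub_one_lt a).not_ge (EReal.coe_le_coe_iff.1 (ha ▸ h))
  obtain ⟨y, s, u, hsep, hlt⟩ := exists_separation_of_notMem_epigraph hcv hcl hz'
  have hs : s < 0 := by linarith [hsep _ hz]
  exact ⟨_, _, legendre_le_of_forall_mem_epigraph hs hsep⟩

theorem ClosedProperConvexOn.exists_legendre_le_of_notMem_epigraph {f : V → EReal}
    (hf : ClosedProperConvexOn f) {x : V} {r : ℝ} (hxr : (x, r) ∉ epigraph f) :
    ∃ (ψ : StrongDual ℝ V) (c : ℝ), legendre f ψ ≤ c ∧ r < ψ x - c := by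
  have ⟨_, hcl, hcv, hne⟩ := hf
  obtain ⟨y, s, u, hsep, hlt⟩ := exists_separation_of_notMem_epigraph hcv hcl hxr
  rcases (nonpos_of_forall_mem_epigraph hne hsep).lt_or_eq with hs | rfl
  · refine ⟨_, _, legendre_le_of_forall_mem_epigraph hs hsep, ?_⟩
    have : ((-s)⁻¹ • y) x - u / -s - r = (y x + s * r - u) / -s := by
      have : s ≠ 0 := hs.ne
      simp only [smul_apply, smul_eq_mul]
      field_simp
      ring
    linarith [div_pos (sub_pos.2 hlt) (neg_pos.2 hs)]
  · simp only [zero_mul, add_zero] at hsep hlt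
    obtain ⟨ψ, c, hψ⟩ := hf.exists_legendre_le
    set l := (|r - (ψ x - c)| + 1) / (y x - u)
    have hl : l * (y x - u) = |r - (ψ x - c)| + 1 := div_mul_cancel₀ _ (sub_pos.2 hlt).ne'
    refine ⟨ψ + l • y, c + l * u, legendre_add_smul_le hψ (fun p hp => (hsep p hp).le)
      (div_nonneg (by positivity) (sub_pos.2 hlt).le), ?_⟩
    simp only [add_apply, smul_apply, smul_eq_mul]
    linarith [le_abs_self (r - (ψ x - c))]

end

theorem legendre_legendre_general
    {V : Type*} [NormedAddCommGroup V] [NormedSpace ℝ V]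
    (f : V → EReal) (hf : ClosedProperConvexOn f) (x : V) :
    legendre (legendre f) (inclusionInDoubleDual ℝ V x) = f x := by
  refine le_antisymm (legendre_legendre_le f x) (EReal.ge_of_forall_gt_iff_ge.1 fun r hr => ?_)
  obtain ⟨ψ, c, hψ, hr'⟩ := hf.exists_legendre_le_of_notMem_epigraph (not_le.2 hr)
  exact (EReal.coe_le_coe_iff.2 hr'.le).trans (coe_sub_le_legendre_legendre hψ x)

/-- biduality `f** = f` for a closed proper convex function on a
finite-dimensional real vector space, via the canonical map `V → V**`. -/
theorem legendre_legendre
    {V : Type*} [NormedAddCommGroup V] [NormedSpace ℝ V] [FiniteDimensional ℝ V]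
    (f : V → EReal) (hf : ClosedProperConvexOn f) (x : V) :
    legendre (legendre f) (inclusionInDoubleDual ℝ V x) = f x :=
  legendre_legendre_general f hf x
end

section
/- Let f : V → ℝ ∪ {+∞} be a function on a real vector space V and let v ∈ V. Then the following are equivalent: (1) there exists a ∈ ℝ such that f(x + v) = f(x) + a for all x ∈ V; (2) there exists a ∈ ℝ such that f(x + t·v) = f(x) + t·a for all x ∈ V and all t ∈ ℝ, provided f is convex. (In particular, for convex f the two definitions of the lineality-type set E(f) agree.) -/
theorem EReal.eq_of_forall_le_coe_iff {y z : EReal} (h : ∀ r : ℝ, y ≤ r ↔ z ≤ r) : y = z :=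
  le_antisymm (EReal.le_of_forall_lt_iff_le.1 fun r hr => (h r).2 hr.le)
    (EReal.le_of_forall_lt_iff_le.1 fun r hr => (h r).1 hr.le)

theorem EReal.eq_add_coe_iff_forall_le {y z : EReal} {c : ℝ} :
    y = z + c ↔ ∀ r : ℝ, y ≤ ↑(r + c) ↔ z ≤ r := by
  have hshift (r : ℝ) : z ≤ r ↔ z + c ≤ ↑(r + c) := by
    rw [EReal.coe_add, (EReal.addLECancellable_coe c).add_le_add_iff_right]
  simp_rw [hshift]
  refine ⟨fun h r => h ▸ Iff.rfl, fun h => eq_of_forall_le_coe_iff fun r => ?_⟩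
  simpa using h (r - c)

theorem Convex.periodic_smul {E : Type*} [AddCommGroup E] [Module ℝ E] {C : Set E}
    (hC : Convex ℝ C) {w : E} (hw : Function.Periodic (· ∈ C) w) (t : ℝ) :
    Function.Periodic (· ∈ C) (t • w) := by
  have add_smul_mem : ∀ p ∈ C, ∀ t : ℝ, p + t • w ∈ C := by
    intro p hp t
    set S : Set ℝ := {s | p + s • w ∈ C}
    have hS : Convex ℝ S :=
      (hC.translate_preimage_right p).linear_preimage (LinearMap.toSpanSingleton ℝ E w)
    have hS_periodic : Function.Periodic (· ∈ S) 1 := fun s => by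
      simp only [S, Set.mem_ofPred_eq, add_smul, one_smul, ← add_assoc]
      exact hw _
    have int_mem : ∀ n : ℤ, (n : ℝ) ∈ S := fun n => by
      simpa [S, hp] using hS_periodic.int_mul_eq n
    exact hS.ordConnected.out (int_mem ⌊t⌋) (by exact_mod_cast int_mem (⌊t⌋ + 1))
      ⟨Int.floor_le t, (Int.lt_floor_add_one t).le⟩
  intro p
  refine propext ⟨fun h => ?_, fun h => add_smul_mem p h t⟩
  simpa using add_smul_mem _ h (-t)

theorem periodic_mem_epigraph_iff {V : Type*} [AddCommGroup V] (f : V → EReal) (w : V) (c : ℝ) :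
    Function.Periodic (· ∈ epigraph f) (w, c) ↔ ∀ x, f (x + w) = f x + c := by
  simp only [EReal.eq_add_coe_iff_forall_le, Function.Periodic, Prod.forall, Prod.mk_add_mk]
  simp [epigraph]

theorem translation_affine_iff_line_affine_general
    {V : Type*} [AddCommGroup V] [Module ℝ V]
    (f : V → EReal) (hconv : Convex ℝ (epigraph f))
    (v : V) :
    (∃ a : ℝ, ∀ x : V, f (x + v) = f x + (a : EReal)) ↔
      (∃ a : ℝ, ∀ (x : V) (t : ℝ), f (x + t • v) = f x + ((t * a : ℝ) : EReal)) := by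
  constructor
  · rintro ⟨a, h⟩
    have hperiodic := (periodic_mem_epigraph_iff f v a).2 h
    refine ⟨a, fun x t => (periodic_mem_epigraph_iff f (t • v) (t * a)).1 ?_ x⟩
    simpa using hconv.periodic_smul hperiodic t
  · rintro ⟨a, h⟩
    exact ⟨a, fun x => by simpa using h x 1⟩

/-- for a convex function `f : V → ℝ ∪ {+∞}`, a vector `v`
satisfies `f(x+v) = f(x) + a` for all `x` (some `a ∈ ℝ`) if and only if
`f(x + t v) = f(x) + t a` for all `x` and all `t ∈ ℝ` (some `a ∈ ℝ`). -/
theorem translation_affine_iff_line_affine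
    {V : Type*} [AddCommGroup V] [Module ℝ V]
    (f : V → EReal) (hbot : ∀ x, f x ≠ ⊥) (hconv : Convex ℝ (epigraph f))
    (v : V) :
    (∃ a : ℝ, ∀ x : V, f (x + v) = f x + (a : EReal)) ↔
      (∃ a : ℝ, ∀ (x : V) (t : ℝ), f (x + t • v) = f x + ((t * a : ℝ) : EReal)) :=
  translation_affine_iff_line_affine_general f hconv v
end

section
/- Let E(f) = {v ∈ V : ∃ a ∈ ℝ, ∀ x, f(x+v) = f(x) + a} for a convex function f : V → ℝ ∪ {+∞} on a real vector space V. Then E(f) is a linear subspace of V. -/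
namespace EReal

lemma le_add_coe_of_forall_coe_le {y z : EReal} {c : ℝ}
    (h : ∀ r : ℝ, y ≤ r → z ≤ r + c) : z ≤ y + c := by
  have hsub : z - c ≤ y := le_of_forall_lt_iff_le.1 fun r hr ↦ by
    simpa only [add_sub_cancel_right] using sub_le_sub (h r hr.le) (le_refl (c : EReal))
  simpa only [sub_add_cancel] using add_le_add_left hsub (c : EReal)

end EReal

open Set

section ConstIncrement

variable {V : Type*} [AddCommGroup V] {f : V → EReal} {u v : V} {a b : ℝ}

def HasConstIncrement (f : V → EReal) (v : V) (a : ℝ) : Prop :=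
  ∀ x, f (x + v) = f x + a

namespace HasConstIncrement

lemma zero : HasConstIncrement f 0 0 := fun x ↦ by simp

lemma add (hu : HasConstIncrement f u a) (hv : HasConstIncrement f v b) :
    HasConstIncrement f (u + v) (a + b) := fun x ↦ by
  rw [← add_assoc, hv, hu, add_assoc, EReal.coe_add]

lemma neg (hv : HasConstIncrement f v a) : HasConstIncrement f (-v) (-a) := fun x ↦ by
  have hx := hv (x - v)
  rw [sub_add_cancel] at hx
  rw [← sub_eq_add_neg, EReal.coe_neg, ← sub_eq_add_neg, hx, EReal.add_sub_cancel_right]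

end HasConstIncrement

def translationSubgroup (f : V → EReal) : AddSubgroup V where
  carrier := {v | ∃ a : ℝ, HasConstIncrement f v a}
  zero_mem' := ⟨0, .zero⟩
  add_mem' := fun ⟨a, hu⟩ ⟨b, hv⟩ ↦ ⟨a + b, hu.add hv⟩
  neg_mem' := fun ⟨a, hv⟩ ↦ ⟨-a, hv.neg⟩

variable [Module ℝ V]

namespace HasConstIncrement

lemma le_add_smul_of_mem_Icc (hconv : Convex ℝ (epigraph f)) (hv : HasConstIncrement f v a)
    {t : ℝ} (ht : t ∈ Icc 0 1) (x : V) : f (x + t • v) ≤ f x + (t * a : ℝ) := by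
  -- testing against real upper bounds `r` of `f x` treats the values `±∞` of `f x` uniformly
  refine EReal.le_add_coe_of_forall_coe_le fun r hr ↦ ?_
  have hx : (x, r) ∈ epigraph f := hr
  have hxv : (x, r) + (v, a) ∈ epigraph f := by
    show f (x + v) ≤ (r + a : ℝ)
    rw [hv, EReal.coe_add]
    exact add_le_add_left hr _
  simpa [epigraph] using hconv.add_smul_mem hx hxv ht

lemma smul_of_mem_Icc (hconv : Convex ℝ (epigraph f)) (hv : HasConstIncrement f v a)
    {t : ℝ} (ht : t ∈ Icc 0 1) : HasConstIncrement f (t • v) (t * a) := fun x ↦ by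
  refine le_antisymm (hv.le_add_smul_of_mem_Icc hconv ht x) ?_
  have hback := hv.neg.le_add_smul_of_mem_Icc hconv ht (x + t • v)
  rw [smul_neg, add_neg_cancel_right, mul_neg, EReal.coe_neg, ← sub_eq_add_neg] at hback
  simpa only [EReal.sub_add_cancel] using add_le_add_left hback ((t * a : ℝ) : EReal)

end HasConstIncrement

lemma smul_mem_translationSubgroup (hconv : Convex ℝ (epigraph f)) (c : ℝ) {v : V}
    (hv : v ∈ translationSubgroup f) : c • v ∈ translationSubgroup f := by
  have hfract : Int.fract c • v ∈ translationSubgroup f := by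
    obtain ⟨a, hva⟩ := hv
    exact ⟨_, hva.smul_of_mem_Icc hconv ⟨Int.fract_nonneg c, (Int.fract_lt_one c).le⟩⟩
  rw [← Int.floor_add_fract c, add_smul, Int.cast_smul_eq_zsmul]
  exact add_mem (zsmul_mem hv _) hfract

def translationSubmodule (hconv : Convex ℝ (epigraph f)) : Submodule ℝ V :=
  { translationSubgroup f with smul_mem' := smul_mem_translationSubgroup hconv }

end ConstIncrement

theorem E_isLinearSubspace_general
    {V : Type*} [AddCommGroup V] [Module ℝ V]
    (f : V → EReal) (hconv : Convex ℝ (epigraph f)) :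
    ∃ S : Submodule ℝ V,
      (S : Set V) = {v : V | ∃ a : ℝ, ∀ x : V, f (x + v) = f x + (a : EReal)} :=
  ⟨translationSubmodule hconv, rfl⟩

/-- for a convex function `f : V → ℝ ∪ {+∞}`, the set
`E(f) = {v | ∃ a ∈ ℝ, ∀ x, f(x+v) = f(x) + a}` is a linear subspace of `V`. -/
theorem E_isLinearSubspace
    {V : Type*} [AddCommGroup V] [Module ℝ V]
    (f : V → EReal) (hbot : ∀ x, f x ≠ ⊥) (hconv : Convex ℝ (epigraph f)) :
    ∃ S : Submodule ℝ V,
      (S : Set V) = {v : V | ∃ a : ℝ, ∀ x : V, f (x + v) = f x + (a : EReal)} :=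
  E_isLinearSubspace_general f hconv
end

section
/- Let L, M, N be Hausdorff locally compact topological spaces with open dense-or-not embeddings L ⊆ L̄, M ⊆ M̄, N ⊆ N̄ into compactly generated Hausdorff spaces, and let e : L → M and f : M → N be continuous maps such that the closure of the graph of e in L̄ × M̄ is proper over L̄, and the closure of the graph of f in M̄ × N̄ is proper over M̄. Then the closure of the graph of f ∘ e in L̄ × N̄ is proper over L̄. -/
/-- The graph, inside `α × β`, of a map `e : L → M` between subsets `L ⊆ α`
and `M ⊆ β`. -/
def bgraph {α β : Type*} (L : Set α) (M : Set β) (e : L → M) : Set (α × β) :=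
  {p | ∃ x : L, p.1 = (x : α) ∧ p.2 = ((e x : M) : β)}

/-- A subset `S ⊆ α × β` is proper over `α` (via the first projection) if the
part of `S` lying over any compact subset of `α` is compact. -/
def ProperOverFst {α β : Type*} [TopologicalSpace α] [TopologicalSpace β]
    (S : Set (α × β)) : Prop :=
  ∀ K : Set α, IsCompact K → IsCompact (S ∩ Prod.fst ⁻¹' K)

/-- composition of morphisms of bordered spaces is a morphism of
bordered spaces: if the closures of the graphs of `e` and `f` are proper over
`L̄` and `M̄` respectively, then the closure of the graph of `f ∘ e` is proper
over `L̄`. -/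
theorem bordered_comp_properOverFst
    {Lb Mb Nb : Type*}
    [TopologicalSpace Lb] [T2Space Lb] [LocallyCompactSpace Lb] [SigmaCompactSpace Lb]
    [TopologicalSpace Mb] [T2Space Mb] [LocallyCompactSpace Mb] [SigmaCompactSpace Mb]
    [TopologicalSpace Nb] [T2Space Nb] [LocallyCompactSpace Nb] [SigmaCompactSpace Nb]
    (L : Set Lb) (M : Set Mb) (N : Set Nb)
    (hL : IsOpen L) (hM : IsOpen M) (hN : IsOpen N)
    (e : L → M) (f : M → N) (he : Continuous e) (hf : Continuous f)
    (hpe : ProperOverFst (closure (bgraph L M e)))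
    (hpf : ProperOverFst (closure (bgraph M N f))) :
    ProperOverFst (closure (bgraph L N (f ∘ e))) := by
  intro K hK
  obtain ⟨K', hK', hKK'⟩ := exists_compact_superset hK
  have hA : IsCompact (closure (bgraph L M e) ∩ Prod.fst ⁻¹' K') := hpe K' hK'
  set KM : Set Mb := Prod.snd '' (closure (bgraph L M e) ∩ Prod.fst ⁻¹' K') with hKMdef
  have hKM : IsCompact KM := hA.image continuous_snd
  have hB : IsCompact (closure (bgraph M N f) ∩ Prod.fst ⁻¹' KM) := hpf KM hKM
  set KN : Set Nb := Prod.snd '' (closure (bgraph M N f) ∩ Prod.fst ⁻¹' KM) with hKNdef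
  have hKN : IsCompact KN := hB.image continuous_snd
  have hsub : bgraph L N (f ∘ e) ∩ Prod.fst ⁻¹' K' ⊆ K' ×ˢ KN := by
    rintro ⟨x, z⟩ ⟨⟨l, hx, hz⟩, hxK⟩
    refine ⟨hxK, ?_⟩
    have h1 : ((l : Lb), ((e l : M) : Mb)) ∈
        closure (bgraph L M e) ∩ Prod.fst ⁻¹' K' :=
      ⟨subset_closure ⟨l, rfl, rfl⟩, by simpa [← hx] using hxK⟩
    have h2 : (((e l : M) : Mb), ((f (e l) : N) : Nb)) ∈
        closure (bgraph M N f) ∩ Prod.fst ⁻¹' KM :=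
      ⟨subset_closure ⟨e l, rfl, rfl⟩, ⟨_, h1, rfl⟩⟩
    exact hz ▸ ⟨_, h2, rfl⟩
  have hcl : closure (bgraph L N (f ∘ e)) ∩ Prod.fst ⁻¹' K ⊆
      closure (bgraph L N (f ∘ e) ∩ Prod.fst ⁻¹' K') := by
    intro p hp
    have hU : IsOpen (Prod.fst ⁻¹' interior K' : Set (Lb × Nb)) :=
      isOpen_interior.preimage continuous_fst
    have hmem : p ∈ (Prod.fst ⁻¹' interior K') ∩ closure (bgraph L N (f ∘ e)) :=
      ⟨hKK' hp.2, hp.1⟩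
    have := hU.inter_closure hmem
    refine closure_mono ?_ this
    rintro q ⟨hq1, hq2⟩
    exact ⟨hq2, interior_subset (a := q.1) hq1⟩
  have hcomp : IsCompact (closure (bgraph L N (f ∘ e) ∩ Prod.fst ⁻¹' K')) :=
    IsCompact.of_isClosed_subset (hK'.prod hKN) isClosed_closure
      (closure_minimal hsub (hK'.prod hKN).isClosed)
  exact IsCompact.of_isClosed_subset hcomp
    (isClosed_closure.inter (hK.isClosed.preimage continuous_fst)) hcl
end

section
/- With the notation of the category of bordered spaces: let e : (L, L̄) → (M, M̄) and f : (M, M̄) → (N, N̄) be morphisms of bordered spaces (so the closures of their graphs are proper over L̄ and M̄ respectively). If moreover the closure of Γ_e in L̄ × M̄ is proper over M̄ and the closure of Γ_f in M̄ × N̄ is proper over N̄ (i.e., both morphisms are semi-proper), then the closure of the graph of f ∘ e in L̄ × N̄ is proper over N̄ (i.e., f ∘ e is semi-proper). -/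
/-- A subset `S ⊆ α × β` is proper over `β` (via the second projection) if the
part of `S` lying over any compact subset of `β` is compact. -/
def ProperOverSnd {α β : Type*} [TopologicalSpace α] [TopologicalSpace β]
    (S : Set (α × β)) : Prop :=
  ∀ K : Set β, IsCompact K → IsCompact (S ∩ Prod.snd ⁻¹' K)

/-- the composition of semi-proper morphisms of bordered spaces
is semi-proper. -/
theorem bordered_comp_semiProper
    {Lb Mb Nb : Type*}
    [TopologicalSpace Lb] [T2Space Lb] [LocallyCompactSpace Lb] [SigmaCompactSpace Lb]
    [TopologicalSpace Mb] [T2Space Mb] [LocallyCompactSpace Mb] [SigmaCompactSpace Mb]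
    [TopologicalSpace Nb] [T2Space Nb] [LocallyCompactSpace Nb] [SigmaCompactSpace Nb]
    (L : Set Lb) (M : Set Mb) (N : Set Nb)
    (hL : IsOpen L) (hM : IsOpen M) (hN : IsOpen N)
    (e : L → M) (f : M → N) (he : Continuous e) (hf : Continuous f)
    (hpe : ProperOverFst (closure (bgraph L M e)))
    (hpf : ProperOverFst (closure (bgraph M N f)))
    (hse : ProperOverSnd (closure (bgraph L M e)))
    (hsf : ProperOverSnd (closure (bgraph M N f))) :
    ProperOverSnd (closure (bgraph L N (f ∘ e))) := by
  intro K hK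
  obtain ⟨K', hK', hKK'⟩ := exists_compact_superset hK
  set Ge := closure (bgraph L M e) with hGe
  set Gf := closure (bgraph M N f) with hGf
  have hC : IsCompact (Prod.fst '' (Gf ∩ Prod.snd ⁻¹' K')) :=
    (hsf K' hK').image continuous_fst
  set C := Prod.fst '' (Gf ∩ Prod.snd ⁻¹' K') with hCdef
  have hA : IsCompact (Ge ∩ Prod.snd ⁻¹' C) := hse C hC
  set A := Ge ∩ Prod.snd ⁻¹' C with hAdef
  set T : Set (Lb × Mb × Nb) :=
    {q | (q.1, q.2.1) ∈ Ge ∧ (q.2.1, q.2.2) ∈ Gf} with hTdef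
  set Z : Set (Lb × Mb × Nb) := {q | q.2.2 ∈ K'} with hZdef
  have hTcl : IsClosed T := by
    apply IsClosed.inter
    · exact isClosed_closure.preimage (by fun_prop)
    · exact isClosed_closure.preimage (by fun_prop)
  have hZcl : IsClosed Z := hK'.isClosed.preimage (by fun_prop)
  have hS3 : IsCompact ((fun pz : (Lb × Mb) × Nb => (pz.1.1, pz.1.2, pz.2)) '' (A ×ˢ K')) :=
    (hA.prod hK').image (by fun_prop)
  have hTZsub : T ∩ Z ⊆ (fun pz : (Lb × Mb) × Nb => (pz.1.1, pz.1.2, pz.2)) '' (A ×ˢ K') := by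
    rintro q ⟨⟨hq1, hq2⟩, hq3⟩
    refine ⟨((q.1, q.2.1), q.2.2), ⟨⟨hq1, ?_⟩, hq3⟩, rfl⟩
    exact ⟨(q.2.1, q.2.2), ⟨hq2, hq3⟩, rfl⟩
  have hTZ : IsCompact (T ∩ Z) := hS3.of_isClosed_subset (hTcl.inter hZcl) hTZsub
  set P := (fun q : Lb × Mb × Nb => (q.1, q.2.2)) '' (T ∩ Z) with hPdef
  have hP : IsCompact P := hTZ.image (by fun_prop)
  have hPcl : IsClosed P := hP.isClosed
  have hGsub : bgraph L N (f ∘ e) ∩ Prod.snd ⁻¹' (interior K') ⊆ P := by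
    rintro p ⟨⟨x, hx1, hx2⟩, hp2⟩
    refine ⟨(p.1, (e x : Mb), p.2), ⟨⟨?_, ?_⟩, show p.2 ∈ K' from interior_subset hp2⟩, rfl⟩
    · rw [hx1]; exact subset_closure ⟨x, rfl, rfl⟩
    · rw [hx2]; exact subset_closure ⟨e x, rfl, rfl⟩
  have hmain : closure (bgraph L N (f ∘ e)) ∩ Prod.snd ⁻¹' K ⊆ P := by
    rintro p ⟨hp1, hp2⟩
    have hpo : p ∈ Prod.snd ⁻¹' (interior K') := hKK' hp2
    have hU : IsOpen (Prod.snd ⁻¹' (interior K') : Set (Lb × Nb)) :=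
      isOpen_interior.preimage continuous_snd
    have : p ∈ closure (Prod.snd ⁻¹' (interior K') ∩ bgraph L N (f ∘ e)) :=
      hU.inter_closure ⟨hpo, hp1⟩
    have hsub : Prod.snd ⁻¹' (interior K') ∩ bgraph L N (f ∘ e) ⊆ P := by
      rintro q ⟨h1, h2⟩; exact hGsub ⟨h2, h1⟩
    exact (closure_minimal hsub hPcl) this
  exact hP.of_isClosed_subset
    (isClosed_closure.inter (hK.isClosed.preimage continuous_snd)) hmain
end

section
/- Let f be a closed proper convex function on a finite-dimensional real inner product space V (identified with its dual). Then the dimension of E(f) = {v : ∃a, ∀x, f(x+v) = f(x)+a} equals the codimension of the affine span H(f*) of dom(f*) in V. -/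
/-- The Legendre transform on an inner product space, identified with its dual
via the inner product pairing: `f*(w) = sup_{x ∈ dom f} (⟪x,w⟫ - f x)`. -/
noncomputable def legendreInner {V : Type*} [NormedAddCommGroup V]
    [InnerProductSpace ℝ V] (f : V → EReal) (w : V) : EReal :=
  ⨆ x : {x : V // f x ≠ ⊤}, (((inner ℝ x.1 w : ℝ) : EReal) - f x.1)

/-! By Fenchel–Moreau, a closed proper convex `f` is the supremum of the affine minorants
`x ↦ ⟪x, w⟫ - c` with `f* w ≤ c`. Hence `⟪v, ·⟫ ≤ a` on `dom f*` gives `f (x + v) ≤ f x + a`,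
and conversely, by Fenchel–Young, such a shift inequality forces `⟪v, ·⟫ ≤ a` on `dom f*`.
Applying both to `±v`, `f (· + v) = f + a` exactly when `⟪v, ·⟫ ≡ a` on `dom f*`, so `E(f)` is
the orthogonal complement of the direction of `H(f*)`. -/

open scoped RealInnerProductSpace

section Shift

variable {G : Type*} [AddGroup G] {f : G → EReal} {v : G} {a : ℝ}

theorem forall_add_neg_eq_of_forall_add_eq (h : ∀ x, f (x + v) = f x + a) (x : G) :
    f (x + -v) = f x + (-a : ℝ) := by
  calc f (x + -v) = f (x + -v) + a - a := EReal.add_sub_cancel_right.symm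
    _ = f x + (-a : ℝ) := by rw [← h, neg_add_cancel_right, EReal.coe_neg, sub_eq_add_neg]

end Shift

section OrthogonalVectorSpan

variable {V : Type*} [NormedAddCommGroup V] [InnerProductSpace ℝ V]

theorem coe_orthogonal_vectorSpan {D : Set V} (hD : D.Nonempty) :
    ((vectorSpan ℝ D)ᗮ : Set V) = {v | ∃ a : ℝ, ∀ w ∈ D, ⟪v, w⟫ = a} := by
  obtain ⟨w₀, hw₀⟩ := hD
  ext v
  simp only [SetLike.mem_coe, Set.mem_ofPred_eq]
  constructor
  · intro hv
    refine ⟨⟪v, w₀⟫, fun w hw => ?_⟩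
    have := Submodule.inner_left_of_mem_orthogonal (vsub_mem_vectorSpan ℝ hw hw₀) hv
    rwa [vsub_eq_sub, inner_sub_right, sub_eq_zero] at this
  · rintro ⟨a, ha⟩
    have : vectorSpan ℝ D ≤ LinearMap.ker (innerₛₗ ℝ v) := by
      refine Submodule.span_le.2 ?_
      rintro _ ⟨w₁, hw₁, w₂, hw₂, rfl⟩
      simp [inner_sub_right, ha w₁ hw₁, ha w₂ hw₂]
    exact (Submodule.mem_orthogonal' _ v).2 fun u hu => this hu

end OrthogonalVectorSpan

section Legendre

variable {V : Type*} [NormedAddCommGroup V] [InnerProductSpace ℝ V] {f : V → EReal}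

theorem inner_sub_le_legendreInner {x : V} (hx : f x ≠ ⊤) (w : V) :
    (⟪x, w⟫ : EReal) - f x ≤ legendreInner f w :=
  le_iSup (fun x : {x : V // f x ≠ ⊤} => (⟪x.1, w⟫ : EReal) - f x.1) ⟨x, hx⟩

theorem inner_sub_toReal_le_of_legendreInner_le (hbot : ∀ x, f x ≠ ⊥) {x w : V} {c : ℝ}
    (hx : f x ≠ ⊤) (hw : legendreInner f w ≤ c) : ⟪x, w⟫ - (f x).toReal ≤ c := by
  have h := (inner_sub_le_legendreInner hx w).trans hw
  rwa [← EReal.coe_toReal hx (hbot x), ← EReal.coe_sub, EReal.coe_le_coe_iff] at h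

theorem legendreInner_le_coe_of_forall (hbot : ∀ x, f x ≠ ⊥) {w : V} {c : ℝ}
    (h : ∀ x, f x ≠ ⊤ → ⟪x, w⟫ - (f x).toReal ≤ c) : legendreInner f w ≤ c := by
  refine iSup_le fun x => ?_
  rw [← EReal.coe_toReal x.2 (hbot x.1), ← EReal.coe_sub, EReal.coe_le_coe_iff]
  exact h x.1 x.2

theorem legendreInner_neg_smul_le_of_lt_inner_add_smul (hbot : ∀ x, f x ≠ ⊥) {w : V} {s c : ℝ}
    (hs : 0 < s) (h : ∀ x, f x ≠ ⊤ → c < ⟪x, w⟫ + s * (f x).toReal) :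
    legendreInner f (-s⁻¹ • w) ≤ (-(c / s) : ℝ) := by
  refine legendreInner_le_coe_of_forall hbot fun x hx => ?_
  have hc : c / s ≤ ⟪x, w⟫ / s + (f x).toReal := by
    rw [div_add' _ _ _ hs.ne', div_le_div_iff_of_pos_right hs]
    linarith [h x hx]
  rw [real_inner_smul_right, neg_mul, ← div_eq_inv_mul]
  linarith

end Legendre

namespace ClosedProperConvexOn

variable {V : Type*} [NormedAddCommGroup V] [InnerProductSpace ℝ V] {f : V → EReal}

theorem exists_ne_top (hf : ClosedProperConvexOn f) : ∃ x, f x ≠ ⊤ :=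
  let ⟨⟨x, t⟩, hxt⟩ := hf.2.2.2
  ⟨x, ne_top_of_le_ne_top (EReal.coe_ne_top t) hxt⟩

theorem legendreInner_ne_bot (hf : ClosedProperConvexOn f) (w : V) : legendreInner f w ≠ ⊥ := by
  obtain ⟨x, hx⟩ := hf.exists_ne_top
  refine ne_bot_of_le_ne_bot ?_ (inner_sub_le_legendreInner hx w)
  rw [← EReal.coe_toReal hx (hf.1 x), ← EReal.coe_sub]
  exact EReal.coe_ne_bot _

theorem inner_le_of_forall_add_eq (hf : ClosedProperConvexOn f) {v : V} {a : ℝ}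
    (h : ∀ x, f (x + v) = f x + a) {w : V} (hw : legendreInner f w ≠ ⊤) : ⟪v, w⟫ ≤ a := by
  set M := (legendreInner f w).toReal
  have hM : legendreInner f w ≤ (M - (⟪v, w⟫ - a) : ℝ) := by
    refine legendreInner_le_coe_of_forall hf.1 fun x hx => ?_
    have hxv : f (x + v) = ((f x).toReal + a : ℝ) := by
      rw [h, EReal.coe_add, EReal.coe_toReal hx (hf.1 x)]
    have := inner_sub_toReal_le_of_legendreInner_le hf.1 (hxv ▸ EReal.coe_ne_top _)
      (EReal.le_coe_toReal hw)
    rw [hxv, EReal.toReal_coe, inner_add_left] at this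
    linarith
  have := (EReal.coe_toReal_le (hf.legendreInner_ne_bot w)).trans hM
  rw [EReal.coe_le_coe_iff] at this
  linarith

variable [CompleteSpace V]

theorem exists_separation_of_not_le (hf : ClosedProperConvexOn f) {y : V} {t : ℝ}
    (hyt : ¬f y ≤ t) :
    ∃ (w : V) (s c : ℝ), 0 ≤ s ∧ ⟪y, w⟫ + s * t < c ∧
      ∀ x, f x ≠ ⊤ → c < ⟪x, w⟫ + s * (f x).toReal := by
  obtain ⟨hbot, hclosed, hconvex, q, hq⟩ := hf
  obtain ⟨l, c, hlt, hgt⟩ :=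
    geometric_hahn_banach_point_closed hconvex hclosed (show (y, t) ∉ epigraph f from hyt)
  set s := l (0, 1)
  set w := (InnerProductSpace.toDual ℝ V).symm (l.comp (ContinuousLinearMap.inl ℝ V ℝ))
  have hl : ∀ x r, l (x, r) = ⟪x, w⟫ + s * r := fun x r => by
    rw [real_inner_comm, InnerProductSpace.toDual_symm_apply]
    calc l (x, r) = l ((x, 0) + r • (0, 1)) := by simp
      _ = _ := by rw [map_add, map_smul, smul_eq_mul, mul_comm]; rfl
  -- the epigraph contains the upward vertical ray from `q`, on which `l` must stay above `c`
  have hs : 0 ≤ s := by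
    by_contra! hs
    set n := (l q - c) / -s
    have hray := hgt (q.1, q.2 + n) (hq.trans (EReal.coe_le_coe_iff.2
      (le_add_of_nonneg_right (div_nonneg (sub_nonneg.2 (hgt q hq).le) (neg_nonneg.2 hs.le)))))
    have hn : s * n = c - l q := by
      rw [mul_div_assoc', div_neg, mul_div_cancel_left₀ _ hs.ne]; ring
    rw [hl, mul_add, hn] at hray
    linarith [hl q.1 q.2]
  refine ⟨w, s, c, hs, hl y t ▸ hlt, fun x hx => hl x _ ▸ hgt (x, (f x).toReal) ?_⟩
  exact (EReal.coe_toReal hx (hbot x)).ge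

theorem exists_legendreInner_ne_top (hf : ClosedProperConvexOn f) :
    ∃ w, legendreInner f w ≠ ⊤ := by
  obtain ⟨x, hx⟩ := hf.exists_ne_top
  set r := (f x).toReal
  have hfx : (r : EReal) = f x := EReal.coe_toReal hx (hf.1 x)
  obtain ⟨w, s, c, -, hlt, hsep⟩ := hf.exists_separation_of_not_le (y := x) (t := r - 1)
    (by rw [← hfx, EReal.coe_le_coe_iff]; linarith)
  have hs : 0 < s := by linarith [hsep x hx]
  exact ⟨_, ne_top_of_le_ne_top (EReal.coe_ne_top _)
    (legendreInner_neg_smul_le_of_lt_inner_add_smul hf.1 hs hsep)⟩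

/-- The pointwise form of the Fenchel–Moreau identity `f = f**`. -/
theorem exists_legendreInner_le_lt_inner_sub (hf : ClosedProperConvexOn f) {y : V} {t : ℝ}
    (hyt : ¬f y ≤ t) : ∃ (w : V) (c : ℝ), legendreInner f w ≤ c ∧ t < ⟪y, w⟫ - c := by
  obtain ⟨w, s, c, hs, hlt, hsep⟩ := hf.exists_separation_of_not_le hyt
  rcases hs.lt_or_eq with hs | rfl
  · refine ⟨-s⁻¹ • w, -(c / s), legendreInner_neg_smul_le_of_lt_inner_add_smul hf.1 hs hsep, ?_⟩
    rw [real_inner_smul_right, neg_mul, ← div_eq_inv_mul, sub_neg_eq_add, neg_add_eq_sub,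
      ← sub_div, lt_div_iff₀ hs]
    linarith
  -- a vertical separating hyperplane: tilt a nonvertical minorant by a large multiple of it
  simp only [zero_mul, add_zero] at hlt hsep
  obtain ⟨w₁, hw₁⟩ := hf.exists_legendreInner_ne_top
  set c₁ := (legendreInner f w₁).toReal
  obtain ⟨n, hn⟩ := exists_lt_nsmul (sub_pos.2 hlt) (t - ⟪y, w₁⟫ + c₁)
  refine ⟨w₁ - (n : ℝ) • w, c₁ - n * c, legendreInner_le_coe_of_forall hf.1 fun x hx => ?_, ?_⟩
  · have h₁ := inner_sub_toReal_le_of_legendreInner_le hf.1 hx (EReal.le_coe_toReal hw₁)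
    have h₂ := mul_le_mul_of_nonneg_left (hsep x hx).le (Nat.cast_nonneg (α := ℝ) n)
    rw [inner_sub_right, real_inner_smul_right]
    linarith
  · rw [nsmul_eq_mul, mul_sub] at hn
    rw [inner_sub_right, real_inner_smul_right]
    linarith

theorem add_le_of_forall_inner_le (hf : ClosedProperConvexOn f) {v : V} {a : ℝ}
    (h : ∀ w, legendreInner f w ≠ ⊤ → ⟪v, w⟫ ≤ a) (x : V) : f (x + v) ≤ f x + a := by
  rcases eq_or_ne (f x) ⊤ with hx | hx
  · rw [hx, EReal.top_add_coe]
    exact le_top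
  rw [← EReal.coe_toReal hx (hf.1 x), ← EReal.coe_add]
  by_contra hlt
  obtain ⟨w, c, hwc, hlt⟩ := hf.exists_legendreInner_le_lt_inner_sub hlt
  have h₁ := h w (ne_top_of_le_ne_top (EReal.coe_ne_top c) hwc)
  have h₂ := inner_sub_toReal_le_of_legendreInner_le hf.1 hx hwc
  rw [inner_add_left] at hlt
  linarith

theorem forall_add_eq_iff (hf : ClosedProperConvexOn f) {v : V} {a : ℝ} :
    (∀ x, f (x + v) = f x + a) ↔ ∀ w, legendreInner f w ≠ ⊤ → ⟪v, w⟫ = a := by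
  constructor
  · intro h w hw
    have hneg := hf.inner_le_of_forall_add_eq (forall_add_neg_eq_of_forall_add_eq h) hw
    rw [inner_neg_left] at hneg
    exact (hf.inner_le_of_forall_add_eq h hw).antisymm (by linarith)
  · intro h x
    refine (hf.add_le_of_forall_inner_le (fun w hw => (h w hw).le) x).antisymm ?_
    have hneg := hf.add_le_of_forall_inner_le (v := -v) (a := -a)
      (fun w hw => by rw [inner_neg_left, h w hw]) (x + v)
    rw [add_neg_cancel_right] at hneg
    calc f x + a ≤ f (x + v) + (-a : ℝ) + a := add_le_add_left hneg _
      _ = f (x + v) := by rw [EReal.coe_neg, ← sub_eq_add_neg, EReal.sub_add_cancel]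

end ClosedProperConvexOn

/-- for a closed proper convex function `f` on a
finite-dimensional real inner product space, `dim E(f)` equals the codimension
of the affine span `H(f*)` of `dom f*`, i.e.
`dim E(f) + dim direction(H(f*)) = dim V`. -/
theorem finrank_E_add_finrank_direction_eq
    {V : Type*} [NormedAddCommGroup V] [InnerProductSpace ℝ V]
    [FiniteDimensional ℝ V]
    (f : V → EReal) (hf : ClosedProperConvexOn f) :
    Module.finrank ℝ
        (Submodule.span ℝ
          {v : V | ∃ a : ℝ, ∀ x : V, f (x + v) = f x + (a : EReal)}) +
      Module.finrank ℝ
        (affineSpan ℝ {w : V | legendreInner f w ≠ ⊤}).direction =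
      Module.finrank ℝ V := by
  have hE : Submodule.span ℝ {v : V | ∃ a : ℝ, ∀ x : V, f (x + v) = f x + (a : EReal)} =
      (affineSpan ℝ {w : V | legendreInner f w ≠ ⊤}).directionᗮ := by
    rw [direction_affineSpan, ← Submodule.span_eq (vectorSpan ℝ _)ᗮ,
      coe_orthogonal_vectorSpan (D := {w | legendreInner f w ≠ ⊤}) hf.exists_legendreInner_ne_top]
    simp_rw [hf.forall_add_eq_iff, Set.mem_ofPred_eq]
  rw [hE, add_comm, Submodule.finrank_add_finrank_orthogonal]
end
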